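/- arXiv:math/0701300 — 2 statements merged into one kernel-verified Lean document; each statement's English description precedes it below -/
import Mathlib

section
/- Let θ be irrational and M a positive integer. Write the outgoing partition P^out_θ(M) = (b₁,…,b_l). Then ∑_{j=1}^l ⌊bⱼθ⌋ = ⌊Mθ⌋. -/
/-!
The first entry `a` of `P^in_φ(M)` minimises `⌈bφ⌉ / b` over `1 ≤ b ≤ M`: it is the last strict
prefix minimum, and the first global minimiser is a strict prefix minimum. Comparing with `b = M`
shows that `⌈aφ⌉ + ⌈(M - a)φ⌉`, which always lies in `{⌈Mφ⌉, ⌈Mφ⌉ + 1}`, equals `⌈Mφ⌉`. By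
induction along the recursion the ceilings of the parts of `P^in_φ(M)` add up to `⌈Mφ⌉`, and
`⌊bθ⌋ = -⌈b(-θ)⌉` turns this into the statement for `P^out_θ(M)`.
-/

open scoped Classical
open Finset

/-- The next (largest) entry of the incoming partition: the largest `a ∈ {1,…,M}`
such that `⌈aθ⌉/a < ⌈a'θ⌉/a'` for all `a' ∈ {1,…,a−1}`. -/
noncomputable def pinStep (θ : ℝ) (M : ℕ) : ℕ :=
  WithBot.unbotD 0 ((Finset.Icc 1 M).filter (fun a : ℕ => ∀ a' ∈ Finset.Ico 1 a,
      ((⌈(a : ℝ) * θ⌉ : ℤ) : ℝ) / (a : ℝ) < ((⌈(a' : ℝ) * θ⌉ : ℤ) : ℝ) / (a' : ℝ))).max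

/-- Fuel-based recursion computing the incoming partition `P^in_θ(M)`. -/
noncomputable def pinListAux (θ : ℝ) : ℕ → ℕ → List ℕ
  | 0, _ => []
  | fuel + 1, M =>
      if M = 0 then [] else pinStep θ M :: pinListAux θ fuel (M - pinStep θ M)

/-- The incoming partition `P^in_θ(M)`, listed in the order produced by the recursion
(which is nonincreasing). -/
noncomputable def pinList (θ : ℝ) (M : ℕ) : List ℕ := pinListAux θ M M

/-- The outgoing partition `P^out_θ(M) := P^in_{−θ}(M)`. -/
noncomputable def poutList (θ : ℝ) (M : ℕ) : List ℕ := pinList (-θ) M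

section PrefixMinima

variable {α : Type*} [LinearOrder α]

theorem exists_max_strictPrefixMinima_isMin (f : ℕ → α) {M : ℕ} (hM : 1 ≤ M) :
    ∃ a : ℕ, ((Icc 1 M).filter (fun a => ∀ a' ∈ Ico 1 a, f a < f a')).max = a ∧
      a ∈ Icc 1 M ∧ ∀ b ∈ Icc 1 M, f a ≤ f b := by
  set S := (Icc 1 M).filter (fun a => ∀ a' ∈ Ico 1 a, f a < f a')
  have hmin : ∃ n, n ∈ Icc 1 M ∧ ∀ b ∈ Icc 1 M, f n ≤ f b :=
    (Icc 1 M).exists_min_image f ⟨1, mem_Icc.2 ⟨le_rfl, hM⟩⟩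
  obtain ⟨hbI, hb⟩ := Nat.find_spec hmin
  set b := Nat.find hmin
  -- the first minimiser is a strict prefix minimum
  have hbS : b ∈ S := by
    simp only [S, mem_filter]
    refine ⟨hbI, fun a' ha' => lt_of_not_ge fun hle => ?_⟩
    obtain ⟨h1, hlt⟩ := mem_Ico.1 ha'
    refine Nat.find_min hmin hlt ⟨mem_Icc.2 ⟨h1, hlt.le.trans (mem_Icc.1 hbI).2⟩, ?_⟩
    exact fun c hc => hle.trans (hb c hc)
  have haS := S.max'_mem ⟨b, hbS⟩
  simp only [S, mem_filter] at haS
  obtain ⟨haI, ha⟩ := haS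
  refine ⟨S.max' ⟨b, hbS⟩, (S.coe_max' _).symm, haI, fun c hc => ?_⟩
  rcases (S.le_max' b hbS).lt_or_eq with hlt | heq
  · exact (ha b (mem_Ico.2 ⟨(mem_Icc.1 hbI).1, hlt⟩)).le.trans (hb c hc)
  · exact heq ▸ hb c hc

end PrefixMinima

theorem ceil_add_eq_of_ceil_div_le {φ a k : ℝ} (ha : 0 < a) (hk : 0 ≤ k)
    (h : (⌈a * φ⌉ : ℝ) / a ≤ ⌈(a + k) * φ⌉ / (a + k)) :
    ⌈(a + k) * φ⌉ = ⌈a * φ⌉ + ⌈k * φ⌉ := by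
  have hsplit : (a + k) * φ = a * φ + k * φ := add_mul a k φ
  refine le_antisymm (hsplit ▸ Int.ceil_add_le _ _) (not_lt.1 fun hlt => ?_)
  have hle := Int.ceil_add_ceil_le (a * φ) (k * φ)
  rw [← hsplit] at hle
  have hone : (⌈(a + k) * φ⌉ : ℝ) = ⌈a * φ⌉ + ⌈k * φ⌉ - 1 := by
    exact_mod_cast (by omega : ⌈(a + k) * φ⌉ = ⌈a * φ⌉ + ⌈k * φ⌉ - 1)
  rw [div_le_div_iff₀ ha (by positivity), hone] at h
  -- `h` now says `k ⌈aφ⌉ + a ≤ a ⌈kφ⌉`, which is `< a (kφ + 1)`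
  nlinarith [mul_le_mul_of_nonneg_left (Int.le_ceil (a * φ)) hk,
    mul_lt_mul_of_pos_left (Int.ceil_lt_add_one (k * φ)) ha]

theorem pinStep_mem_Icc_and_le (φ : ℝ) {M : ℕ} (hM : 1 ≤ M) :
    pinStep φ M ∈ Icc 1 M ∧ ∀ b ∈ Icc 1 M,
      (⌈(pinStep φ M : ℝ) * φ⌉ : ℝ) / pinStep φ M ≤ (⌈(b : ℝ) * φ⌉ : ℝ) / b := by
  obtain ⟨a, hmax, ha⟩ :=
    exists_max_strictPrefixMinima_isMin (fun a : ℕ => (⌈(a : ℝ) * φ⌉ : ℝ) / a) hM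
  rwa [pinStep, hmax]

theorem ceil_pinStep_add_ceil_sub (φ : ℝ) {M : ℕ} (hM : 1 ≤ M) :
    ⌈(pinStep φ M : ℝ) * φ⌉ + ⌈((M - pinStep φ M : ℕ) : ℝ) * φ⌉ = ⌈(M : ℝ) * φ⌉ := by
  obtain ⟨ha, hmin⟩ := pinStep_mem_Icc_and_le φ hM
  obtain ⟨ha1, haM⟩ := mem_Icc.1 ha
  have hM' : (M : ℝ) = pinStep φ M + ((M - pinStep φ M : ℕ) : ℝ) := by
    rw [Nat.cast_sub haM]; ring
  have h := hmin M (mem_Icc.2 ⟨hM, le_rfl⟩)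
  rw [hM'] at h ⊢
  exact (ceil_add_eq_of_ceil_div_le (by exact_mod_cast ha1) (Nat.cast_nonneg _) h).symm

theorem sum_map_ceil_pinListAux (φ : ℝ) :
    ∀ fuel M : ℕ, M ≤ fuel →
      ((pinListAux φ fuel M).map fun b : ℕ => ⌈(b : ℝ) * φ⌉).sum = ⌈(M : ℝ) * φ⌉
  | 0, M, hM => by simp [Nat.le_zero.1 hM, pinListAux]
  | fuel + 1, 0, _ => by simp [pinListAux]
  | fuel + 1, M + 1, hM => by
    have hM1 : 1 ≤ M + 1 := by omega
    have hstep := mem_Icc.1 (pinStep_mem_Icc_and_le φ hM1).1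
    rw [pinListAux, if_neg M.succ_ne_zero, List.map_cons, List.sum_cons,
      sum_map_ceil_pinListAux φ fuel _ (by omega), ceil_pinStep_add_ceil_sub φ hM1]

theorem sum_map_ceil_pinList (φ : ℝ) (M : ℕ) :
    ((pinList φ M).map fun b : ℕ => ⌈(b : ℝ) * φ⌉).sum = ⌈(M : ℝ) * φ⌉ :=
  sum_map_ceil_pinListAux φ M M le_rfl

theorem pout_sum_floor_general (θ : ℝ) (M : ℕ) :
    ((poutList θ M).map (fun b => ⌊(b : ℝ) * θ⌋)).sum = ⌊(M : ℝ) * θ⌋ := by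
  -- the parts are summed after casting the whole list to `List ℝ`
  have hcoe : ((poutList θ M : List ℕ) : List ℝ) = (pinList (-θ) M).map (↑) :=
    List.flatMap_pure_eq_map _ _
  have hfloor (x : ℝ) : ⌊x * θ⌋ = -⌈x * -θ⌉ := by rw [mul_neg, Int.ceil_neg, neg_neg]
  rw [hcoe, List.map_map, hfloor, ← sum_map_ceil_pinList, List.sum_neg, List.map_map]
  simp only [Function.comp_def, hfloor]

/-- the sum of `⌊bⱼθ⌋` over the outgoing partition of `M` is `⌊Mθ⌋`. -/
theorem pout_sum_floor (θ : ℝ) (hθ : Irrational θ) (M : ℕ) (hM : 1 ≤ M) :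
    ((poutList θ M).map (fun b => ⌊(b : ℝ) * θ⌋)).sum = ⌊(M : ℝ) * θ⌋ :=
  pout_sum_floor_general θ M
end

section
/- Let θ be irrational, M ≥ 1, write P^in_θ(M) = (a₁,…,a_k) and P^out_θ(M) = (b₁,…,b_l) nonincreasingly, let m be minimal with ∑_{j=1}^m bⱼ ≥ a₁, and set b̄ := ∑_{j=1}^m bⱼ − a₁. If k > 1, then P^out_θ(M − a₁) equals the multiset {b̄, b_{m+1}, …, b_l}. -/
open scoped Classical
open Finset

/-!
The heads `a = a₁(M)` and `b = b₁(M)` of the two partitions are the last best upper and best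
lower approximation denominators of `θ` up to `M`. They satisfy `b⌈aθ⌉ - a⌊bθ⌋ = 1` and
`M < a + b`. By unimodularity, a lattice point `(c, ⌈cθ⌉)` with `⌈cθ⌉/c < ⌈aθ⌉/a` is a positive
integral combination of `(a, ⌈aθ⌉)` and `(b, ⌊bθ⌋)`, so `c ≥ a + b`. As `M` grows the pair
therefore only changes at `M = a + b`, where the mediant replaces one of its entries; consequently,
if `b < a` then `a - b` is the best upper approximation preceding `a`, and `a₁(M - b) = a - b`.
Removing the common first part `b` from both partitions reduces the case `m ≥ 2` to `M - b`, while
for `m = 1` one has `a < b` and `b₁(M - a) = b - a`.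
-/

def ceilRecords (θ : ℝ) : Set ℕ :=
  {a | 1 ≤ a ∧ ∀ a', 1 ≤ a' → a' < a → ⌈(a : ℝ) * θ⌉ * a' < ⌈(a' : ℝ) * θ⌉ * a}

section Records

variable {θ : ℝ} {M N : ℕ}

theorem one_mem_ceilRecords (θ : ℝ) : 1 ∈ ceilRecords θ :=
  ⟨le_rfl, fun _ h h' => absurd h' (by omega)⟩

theorem pinStep_isGreatest (hM : 1 ≤ M) :
    IsGreatest (ceilRecords θ ∩ Set.Iic M) (pinStep θ M) := by
  unfold pinStep
  set S := (Finset.Icc 1 M).filter (fun a : ℕ => ∀ a' ∈ Finset.Ico 1 a,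
      ((⌈(a : ℝ) * θ⌉ : ℤ) : ℝ) / (a : ℝ) < ((⌈(a' : ℝ) * θ⌉ : ℤ) : ℝ) / (a' : ℝ))
  have hS : (S : Set ℕ) = ceilRecords θ ∩ Set.Iic M := by
    ext a
    simp only [S, Finset.coe_filter, Finset.mem_Icc, Finset.mem_Ico, ceilRecords, Set.mem_ofPred_eq,
      Set.mem_inter_iff, Set.mem_Iic]
    constructor
    · rintro ⟨⟨ha, haM⟩, h⟩
      refine ⟨⟨ha, fun a' ha' ha'a => ?_⟩, haM⟩
      have := h a' ⟨ha', ha'a⟩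
      rw [div_lt_div_iff₀ (by positivity) (by positivity)] at this
      exact_mod_cast this
    · rintro ⟨⟨ha, h⟩, haM⟩
      refine ⟨⟨ha, haM⟩, fun a' ⟨ha', ha'a⟩ => ?_⟩
      rw [div_lt_div_iff₀ (by positivity) (by positivity)]
      exact_mod_cast h a' ha' ha'a
  have hne : S.Nonempty := ⟨1, by rw [← Finset.mem_coe, hS]; exact ⟨one_mem_ceilRecords θ, hM⟩⟩
  rw [← Finset.coe_max' hne, ← hS]
  exact S.isGreatest_max' hne

theorem pinStep_eq_of_isGreatest {x : ℕ} (h : IsGreatest (ceilRecords θ ∩ Set.Iic M) x) :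
    pinStep θ M = x :=
  (pinStep_isGreatest (h.1.1.1.trans h.1.2)).unique h

theorem one_le_pinStep (hM : 1 ≤ M) : 1 ≤ pinStep θ M :=
  (pinStep_isGreatest hM).1.1.1

theorem pinStep_le (hM : 1 ≤ M) : pinStep θ M ≤ M :=
  (pinStep_isGreatest hM).1.2

theorem pinStep_of_mem_ceilRecords (h : M ∈ ceilRecords θ) : pinStep θ M = M :=
  pinStep_eq_of_isGreatest ⟨⟨h, Set.mem_Iic.2 le_rfl⟩, fun _ hc => hc.2⟩

theorem pinStep_succ_of_not_mem (hN : 1 ≤ N) (h : N + 1 ∉ ceilRecords θ) :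
    pinStep θ (N + 1) = pinStep θ N := by
  have hg := pinStep_isGreatest (θ := θ) hN
  refine pinStep_eq_of_isGreatest ⟨⟨hg.1.1, hg.1.2.trans N.le_succ⟩, fun c ⟨hc, hcN⟩ => ?_⟩
  have : c ≠ N + 1 := by rintro rfl; exact h hc
  exact hg.2 ⟨hc, by simp only [Set.mem_Iic] at hcN ⊢; omega⟩

end Records

section Unimodular

variable {θ : ℝ} {a b c : ℕ}

theorem ceil_natCast_mul_neg (θ : ℝ) (n : ℕ) : ⌈(n : ℝ) * -θ⌉ = -⌊(n : ℝ) * θ⌋ := by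
  rw [mul_neg, Int.ceil_neg]

theorem floor_natCast_mul_neg (θ : ℝ) (n : ℕ) : ⌊(n : ℝ) * -θ⌋ = -⌈(n : ℝ) * θ⌉ := by
  rw [mul_neg, Int.floor_neg]

theorem Irrational.floor_lt {x : ℝ} (hx : Irrational x) : (⌊x⌋ : ℝ) < x :=
  (Int.floor_le x).lt_of_ne (hx.ne_int _).symm

theorem Irrational.ceil_eq_floor_add_one {x : ℝ} (hx : Irrational x) : ⌈x⌉ = ⌊x⌋ + 1 :=
  (Int.ceil_eq_floor_add_one_iff_notMem x).2 (by rintro ⟨n, rfl⟩; exact hx.ne_int n rfl)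

/-- `(a, ⌈aθ⌉)` and `(b, ⌊bθ⌋)` form a basis of `ℤ²`. -/
def Unimodular (θ : ℝ) (a b : ℕ) : Prop :=
  (b : ℤ) * ⌈(a : ℝ) * θ⌉ - a * ⌊(b : ℝ) * θ⌋ = 1

theorem unimodular_neg_iff : Unimodular (-θ) b a ↔ Unimodular θ a b := by
  simp only [Unimodular, ceil_natCast_mul_neg, floor_natCast_mul_neg]
  constructor <;> intro h <;> linarith

theorem Unimodular.ceil_mul_le (h : Unimodular θ a b) (hθ : Irrational θ) (hb : 1 ≤ b)
    (hc : c < a + b) : ⌈(a : ℝ) * θ⌉ * c ≤ ⌈(c : ℝ) * θ⌉ * a := by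
  by_contra! hlt
  set p := ⌈(a : ℝ) * θ⌉
  set q := ⌊(b : ℝ) * θ⌋
  set y := ⌈(c : ℝ) * θ⌉
  -- `(c, y) = s • (a, p) + t • (b, q)` with `t ≥ 1`; comparing with the line of slope `θ`
  -- forces `s ≥ 1`, whence `c ≥ a + b`.
  have hdet : (b : ℤ) * p - a * q = 1 := h
  have ht : (1 : ℤ) ≤ c * p - y * a := by linarith
  have hs : (1 : ℤ) ≤ y * b - c * q := by
    by_contra! hs
    have hsR : ((y * b - c * q : ℤ) : ℝ) ≤ 0 := by exact_mod_cast Int.lt_add_one_iff.mp hs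
    have htR : (1 : ℝ) ≤ ((c * p - y * a : ℤ) : ℝ) := by exact_mod_cast ht
    have hdetR : (b : ℝ) * p - a * q = 1 := by exact_mod_cast hdet
    have hp : (a : ℝ) * θ ≤ p := Int.le_ceil _
    have hq : (q : ℝ) < b * θ := (hθ.natCast_mul (by omega)).floor_lt
    have hy : (c : ℝ) * θ ≤ y := Int.le_ceil _
    push_cast at hsR htR
    nlinarith
  have hsum : (y * b - c * q) * a + (c * p - y * a) * b = (c : ℤ) := by
    linear_combination (c : ℤ) * hdet
  nlinarith

theorem Unimodular.not_mem_ceilRecords (h : Unimodular θ a b) (hθ : Irrational θ) (ha : 1 ≤ a)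
    (hb : 1 ≤ b) (hac : a < c) (hc : c < a + b) : c ∉ ceilRecords θ := fun hrec => by
  have := hrec.2 a ha hac
  have := h.ceil_mul_le hθ hb hc
  linarith

theorem ceil_add_eq_or_floor_add_eq (θ : ℝ) (a b : ℕ) :
    ⌈((a + b : ℕ) : ℝ) * θ⌉ = ⌈(a : ℝ) * θ⌉ + ⌊(b : ℝ) * θ⌋ ∨
      ⌊((a + b : ℕ) : ℝ) * θ⌋ = ⌈(a : ℝ) * θ⌉ + ⌊(b : ℝ) * θ⌋ := by
  have h1 := Int.le_ceil ((a : ℝ) * θ)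
  have h2 := Int.ceil_lt_add_one ((a : ℝ) * θ)
  have h3 := Int.floor_le ((b : ℝ) * θ)
  have h4 := Int.lt_floor_add_one ((b : ℝ) * θ)
  rcases le_or_gt (((a + b : ℕ) : ℝ) * θ) (⌈(a : ℝ) * θ⌉ + ⌊(b : ℝ) * θ⌋) with h | h
  · left
    rw [Int.ceil_eq_iff]
    push_cast at h ⊢
    constructor <;> linarith
  · right
    rw [Int.floor_eq_iff]
    push_cast at h ⊢
    constructor <;> linarith

section Mediant

variable (hceil : ⌈((a + b : ℕ) : ℝ) * θ⌉ = ⌈(a : ℝ) * θ⌉ + ⌊(b : ℝ) * θ⌋)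
include hceil

theorem Unimodular.mediant (h : Unimodular θ a b) : Unimodular θ (a + b) b := by
  unfold Unimodular at h ⊢
  rw [hceil]
  push_cast
  linear_combination h

theorem Unimodular.mediant_mem_ceilRecords (h : Unimodular θ a b) (hθ : Irrational θ)
    (ha : 1 ≤ a) (hb : 1 ≤ b) : a + b ∈ ceilRecords θ := by
  refine ⟨by omega, fun c hc hcab => ?_⟩
  have hca := h.ceil_mul_le hθ hb hcab
  unfold Unimodular at h
  rw [hceil]
  have hcZ : (1 : ℤ) ≤ c := by exact_mod_cast hc
  have haZ : (1 : ℤ) ≤ a := by exact_mod_cast ha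
  push_cast
  nlinarith

theorem Unimodular.mediant_not_mem_ceilRecords_neg (h : Unimodular θ a b) (hθ : Irrational θ)
    (ha : 1 ≤ a) (hb : 1 ≤ b) : a + b ∉ ceilRecords (-θ) := fun hrec => by
  have hrec := hrec.2 b hb (by omega)
  have hfloor : ⌊((a + b : ℕ) : ℝ) * θ⌋ = ⌈(a : ℝ) * θ⌉ + ⌊(b : ℝ) * θ⌋ - 1 := by
    rw [← hceil, (hθ.natCast_mul (m := a + b) (by omega)).ceil_eq_floor_add_one,
      add_sub_cancel_right]
  rw [ceil_natCast_mul_neg, ceil_natCast_mul_neg, hfloor] at hrec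
  unfold Unimodular at h
  push_cast at hrec
  nlinarith

end Mediant

end Unimodular

/-- `pinStep θ M` and `pinStep (-θ) M` are the heads `a₁`, `b₁` of `P^in_θ(M)`, `P^out_θ(M)`. -/
structure HeadsInvariant (θ : ℝ) (M : ℕ) : Prop where
  unimodular : Unimodular θ (pinStep θ M) (pinStep (-θ) M)
  lt_add : M < pinStep θ M + pinStep (-θ) M
  isGreatest_sub : pinStep (-θ) M < pinStep θ M →
    IsGreatest (ceilRecords θ ∩ Set.Iio (pinStep θ M)) (pinStep θ M - pinStep (-θ) M)

section HeadsInvariant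

variable {θ : ℝ} {M N : ℕ}

theorem headsInvariant_one (hθ : Irrational θ) : HeadsInvariant θ 1 := by
  have h1 : pinStep θ 1 = 1 := pinStep_of_mem_ceilRecords (one_mem_ceilRecords θ)
  have h1' : pinStep (-θ) 1 = 1 := pinStep_of_mem_ceilRecords (one_mem_ceilRecords (-θ))
  refine ⟨?_, by omega, by omega⟩
  simp only [h1, h1', Unimodular, Nat.cast_one, one_mul, hθ.ceil_eq_floor_add_one]
  ring

theorem HeadsInvariant.succ_of_lt (h : HeadsInvariant θ N) (hθ : Irrational θ) (hN : 1 ≤ N)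
    (hlt : N + 1 < pinStep θ N + pinStep (-θ) N) : HeadsInvariant θ (N + 1) := by
  have ha := one_le_pinStep (θ := θ) hN
  have hb := one_le_pinStep (θ := -θ) hN
  have ha' : pinStep θ (N + 1) = pinStep θ N :=
    pinStep_succ_of_not_mem hN <| h.unimodular.not_mem_ceilRecords hθ ha (by omega)
      (by have := pinStep_le (θ := θ) hN; omega) hlt
  have hb' : pinStep (-θ) (N + 1) = pinStep (-θ) N :=
    pinStep_succ_of_not_mem hN <| (unimodular_neg_iff.2 h.unimodular).not_mem_ceilRecords
      hθ.neg hb (by omega) (by have := pinStep_le (θ := -θ) hN; omega) (by omega)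
  rw [← ha', ← hb'] at hlt
  exact ⟨ha' ▸ hb' ▸ h.unimodular, hlt, ha' ▸ hb' ▸ h.isGreatest_sub⟩

theorem headsInvariant_succ_of_ceil_eq (h : Unimodular θ (pinStep θ N) (pinStep (-θ) N))
    (hθ : Irrational θ) (hN : 1 ≤ N) (hsum : N + 1 = pinStep θ N + pinStep (-θ) N)
    (hceil : ⌈((pinStep θ N + pinStep (-θ) N : ℕ) : ℝ) * θ⌉ =
      ⌈(pinStep θ N : ℝ) * θ⌉ + ⌊(pinStep (-θ) N : ℝ) * θ⌋) :
    HeadsInvariant θ (N + 1) ∧ HeadsInvariant (-θ) (N + 1) := by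
  have hga := pinStep_isGreatest (θ := θ) hN
  have ha := hga.1.1.1
  have hb := one_le_pinStep (θ := -θ) hN
  have ha' : pinStep θ (N + 1) = N + 1 :=
    pinStep_of_mem_ceilRecords (hsum ▸ h.mediant_mem_ceilRecords hceil hθ ha (by omega))
  have hb' : pinStep (-θ) (N + 1) = pinStep (-θ) N :=
    pinStep_succ_of_not_mem hN (hsum ▸ h.mediant_not_mem_ceilRecords_neg hceil hθ ha hb)
  have hmed : Unimodular θ (N + 1) (pinStep (-θ) (N + 1)) := hb' ▸ hsum ▸ h.mediant hceil
  constructor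
  · refine ⟨by rw [ha']; exact hmed, by omega, fun _ => ?_⟩
    rw [ha', hb', show N + 1 - pinStep (-θ) N = pinStep θ N by omega]
    exact ⟨⟨hga.1.1, Set.mem_Iio.2 (by omega)⟩,
      fun c ⟨hc, hcN⟩ => hga.2 ⟨hc, Set.mem_Iic.2 (Nat.lt_succ_iff.1 hcN)⟩⟩
  · refine ⟨?_, ?_, ?_⟩ <;> rw [neg_neg, ha']
    · exact unimodular_neg_iff.2 hmed
    · omega
    · omega

theorem headsInvariant (hθ : Irrational θ) (hM : 1 ≤ M) : HeadsInvariant θ M := by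
  induction M generalizing θ with
  | zero => omega
  | succ N ih =>
    rcases Nat.eq_zero_or_pos N with rfl | hN
    · exact headsInvariant_one hθ
    have h := ih hθ hN
    rcases (Nat.succ_le_of_lt h.lt_add).lt_or_eq with hlt | hsum
    · exact h.succ_of_lt hθ hN hlt
    rcases ceil_add_eq_or_floor_add_eq θ (pinStep θ N) (pinStep (-θ) N) with hceil | hfloor
    · exact (headsInvariant_succ_of_ceil_eq h.unimodular hθ hN hsum hceil).1
    · -- the mediant is a new best lower approximation: this is the previous case for `-θ`
      have hsum' : N + 1 = pinStep (-θ) N + pinStep (- -θ) N := by rw [neg_neg]; omega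
      have hceil' : ⌈((pinStep (-θ) N + pinStep (- -θ) N : ℕ) : ℝ) * -θ⌉ =
          ⌈(pinStep (-θ) N : ℝ) * -θ⌉ + ⌊(pinStep (- -θ) N : ℝ) * -θ⌋ := by
        rw [neg_neg, ceil_natCast_mul_neg, ceil_natCast_mul_neg, floor_natCast_mul_neg, add_comm,
          hfloor]
        ring
      simpa only [neg_neg] using
        (headsInvariant_succ_of_ceil_eq (ih hθ.neg hN).unimodular hθ.neg hN hsum' hceil').2

theorem pinStep_sub_pinStep_neg (hθ : Irrational θ) (hM : 1 ≤ M)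
    (hlt : pinStep (-θ) M < pinStep θ M) :
    pinStep θ (M - pinStep (-θ) M) = pinStep θ M - pinStep (-θ) M := by
  have h := headsInvariant hθ hM
  have hg := h.isGreatest_sub hlt
  have ha := pinStep_le (θ := θ) hM
  refine pinStep_eq_of_isGreatest ⟨⟨hg.1.1, Set.mem_Iic.2 (by omega)⟩, fun c ⟨hc, hcM⟩ => ?_⟩
  exact hg.2 ⟨hc, Set.mem_Iio.2 (by have := h.lt_add; simp only [Set.mem_Iic] at hcM; omega)⟩

theorem pinStep_ne_pinStep_neg (hθ : Irrational θ) (hlt : pinStep θ M < M) :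
    pinStep θ M ≠ pinStep (-θ) M := by
  intro heq
  have h := headsInvariant hθ (by omega : 1 ≤ M)
  have hdet := h.unimodular
  rw [Unimodular, ← heq, ← mul_sub] at hdet
  have h1 : pinStep θ M = 1 := by exact_mod_cast Int.eq_one_of_mul_eq_one_right (by positivity) hdet
  have := h.lt_add
  omega

end HeadsInvariant

section Lists

variable {θ : ℝ} {M : ℕ}

theorem pinListAux_eq_of_le (θ : ℝ) {f g N : ℕ} (hf : N ≤ f) (hg : N ≤ g) :
    pinListAux θ f N = pinListAux θ g N := by
  induction f generalizing N g with
  | zero =>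
    obtain rfl : N = 0 := by omega
    cases g <;> simp [pinListAux]
  | succ f ih =>
    rcases Nat.eq_zero_or_pos N with rfl | hN
    · cases g <;> simp [pinListAux]
    obtain ⟨g, rfl⟩ : ∃ g', g = g' + 1 := ⟨g - 1, by omega⟩
    have := one_le_pinStep (θ := θ) hN
    simp only [pinListAux, if_neg hN.ne']
    rw [ih (by omega) (by omega : N - pinStep θ N ≤ g)]

theorem pinList_cons (θ : ℝ) (hM : 1 ≤ M) :
    pinList θ M = pinStep θ M :: pinList θ (M - pinStep θ M) := by
  obtain ⟨N, rfl⟩ : ∃ N, M = N + 1 := ⟨M - 1, by omega⟩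
  have := one_le_pinStep (θ := θ) hM
  rw [pinList, pinListAux, if_neg N.succ_ne_zero, pinList, pinListAux_eq_of_le θ (by omega) le_rfl]

theorem headI_pinList (θ : ℝ) (hM : 1 ≤ M) : (pinList θ M).headI = pinStep θ M := by
  rw [pinList_cons θ hM, List.headI_cons]

theorem pinList_eq_nil_iff (θ : ℝ) : pinList θ M = [] ↔ M = 0 := by
  rcases Nat.eq_zero_or_pos M with rfl | hM
  · exact iff_of_true rfl rfl
  · rw [pinList_cons θ hM]
    exact iff_of_false (List.cons_ne_nil _ _) hM.ne'

theorem two_le_length_pinList_iff (θ : ℝ) : 2 ≤ (pinList θ M).length ↔ pinStep θ M < M := by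
  rcases Nat.eq_zero_or_pos M with rfl | hM
  · simp [pinList, pinListAux]
  · have := pinStep_le (θ := θ) hM
    have hnil : (pinList θ (M - pinStep θ M)).length = 0 ↔ M - pinStep θ M = 0 := by
      rw [List.length_eq_zero_iff, pinList_eq_nil_iff]
    rw [pinList_cons θ hM, List.length_cons]
    omega

end Lists

theorem poutList_sub_pinStep_of_le {θ : ℝ} (hθ : Irrational θ) {M : ℕ} (hM : pinStep θ M < M)
    (hab : pinStep θ M ≤ pinStep (-θ) M) :
    poutList θ (M - pinStep θ M) =
      (pinStep (-θ) M - pinStep θ M) :: poutList θ (M - pinStep (-θ) M) := by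
  have hab : pinStep θ M < pinStep (-θ) M := hab.lt_of_ne (pinStep_ne_pinStep_neg hθ hM)
  have hstep : pinStep (-θ) (M - pinStep θ M) = pinStep (-θ) M - pinStep θ M := by
    simpa only [neg_neg] using pinStep_sub_pinStep_neg hθ.neg (by omega : 1 ≤ M)
      (by simpa only [neg_neg] using hab)
  have hb := pinStep_le (θ := -θ) (M := M) (by omega)
  rw [poutList, pinList_cons (-θ) (by omega), hstep,
    show M - pinStep θ M - (pinStep (-θ) M - pinStep θ M) = M - pinStep (-θ) M by omega]
  rfl

theorem poutList_sub_pinStep {θ : ℝ} (hθ : Irrational θ) (m : ℕ) {M : ℕ} (hM : pinStep θ M < M)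
    (hm1 : pinStep θ M ≤ ((poutList θ M).take m).sum)
    (hm2 : ∀ m' < m, ((poutList θ M).take m').sum < pinStep θ M) :
    poutList θ (M - pinStep θ M) =
      (((poutList θ M).take m).sum - pinStep θ M) :: (poutList θ M).drop m := by
  induction m generalizing M with
  | zero =>
    have := one_le_pinStep (θ := θ) (M := M) (by omega)
    simp only [List.take_zero, List.sum_nil] at hm1
    omega
  | succ m ih =>
    have hb := pinStep_le (θ := -θ) (M := M) (by omega)
    have hpout : poutList θ M = pinStep (-θ) M :: poutList θ (M - pinStep (-θ) M) :=
      pinList_cons (-θ) (by omega)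
    rw [hpout] at hm1 hm2 ⊢
    simp only [List.take_succ_cons, List.sum_cons, List.drop_succ_cons] at hm1 ⊢
    rcases m with _ | m
    · simp only [List.take_zero, List.sum_nil, add_zero] at hm1 ⊢
      exact poutList_sub_pinStep_of_le hθ hM hm1
    have hba : pinStep (-θ) M < pinStep θ M := by simpa using hm2 1 (by omega)
    have hstep := pinStep_sub_pinStep_neg hθ (by omega) hba
    have hrec := ih (M := M - pinStep (-θ) M) (by omega) (by omega) fun m' hm' => by
      have := hm2 (m' + 1) (by omega)
      simp only [List.take_succ_cons, List.sum_cons] at this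
      omega
    rw [hstep, show M - pinStep (-θ) M - (pinStep θ M - pinStep (-θ) M) = M - pinStep θ M by
      omega] at hrec
    rw [hrec]
    congr 1
    omega

theorem pout_recursion_general (θ : ℝ) (hθ : Irrational θ) (M : ℕ) (m : ℕ)
    (hm1 : (pinList θ M).headI ≤ (((poutList θ M).take m).sum))
    (hm2 : ∀ m' < m, (((poutList θ M).take m').sum) < (pinList θ M).headI)
    (hk : 2 ≤ (pinList θ M).length) :
    (↑(poutList θ (M - (pinList θ M).headI)) : Multiset ℕ) =
      (((poutList θ M).take m).sum - (pinList θ M).headI) ::ₘ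
        (↑((poutList θ M).drop m) : Multiset ℕ) := by
  have hk : pinStep θ M < M := (two_le_length_pinList_iff θ).1 hk
  rw [headI_pinList θ (by omega)] at hm1 hm2 ⊢
  rw [poutList_sub_pinStep hθ m hk hm1 hm2, Multiset.cons_coe]

/-- with notation as above and `k > 1`, the outgoing partition of
`M − a₁` is the multiset `{b̄, b_{m+1}, …, b_l}`. -/
theorem pout_recursion (θ : ℝ) (hθ : Irrational θ) (M : ℕ) (hM : 1 ≤ M) (m : ℕ)
    (hml : m ≤ (poutList θ M).length)
    (hm1 : (pinList θ M).headI ≤ (((poutList θ M).take m).sum))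
    (hm2 : ∀ m' < m, (((poutList θ M).take m').sum) < (pinList θ M).headI)
    (hk : 2 ≤ (pinList θ M).length) :
    (↑(poutList θ (M - (pinList θ M).headI)) : Multiset ℕ) =
      (((poutList θ M).take m).sum - (pinList θ M).headI) ::ₘ
        (↑((poutList θ M).drop m) : Multiset ℕ) :=
  pout_recursion_general θ hθ M m hm1 hm2 hk
end
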